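/- arXiv:2104.04181 — 2 statements merged into one kernel-verified Lean document; each statement's English description precedes it below -/
import Mathlib

section
/- (Lemma 1 of the paper, lower bound) Let A be an n×n real matrix, let W be a symmetric positive definite n×n real matrix, and let P̄ be a symmetric positive semidefinite n×n real matrix. Then there exists a constant η > 0 such that c(i) ≥ η·ρ(A)^{2i} for all integers i ≥ 1. -/
open Matrix

/-- Spectral radius of a real square matrix: the largest modulus of its
complex eigenvalues. -/
noncomputable def specRad {n : ℕ} (A : Matrix (Fin n) (Fin n) ℝ) : ℝ :=
  (spectralRadius ℂ (A.map Complex.ofReal)).toReal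

/-- Sum of all entries of a matrix. -/
noncomputable def entrySum {n : ℕ} (A : Matrix (Fin n) (Fin n) ℝ) : ℝ := ∑ i, ∑ j, A i j

section Aux

attribute [local instance] Matrix.frobeniusSeminormedAddCommGroup
  Matrix.frobeniusNormedAddCommGroup Matrix.frobeniusNormedSpace
  Matrix.frobeniusNormedRing Matrix.frobeniusNormedAlgebra

variable {n : ℕ}

lemma trace_nonneg_of_posSemidef {M : Matrix (Fin n) (Fin n) ℝ} (hM : M.PosSemidef) :
    0 ≤ M.trace := by
  rw [Matrix.trace]
  refine Finset.sum_nonneg fun i _ => ?_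
  have h := hM.diag_nonneg (i := i)
  simpa [Matrix.diag, dotProduct, Matrix.mulVec, Pi.single_apply,
    Finset.sum_ite_eq, Finset.sum_ite_eq'] using h

lemma trace_mul_transpose_eq (M : Matrix (Fin n) (Fin n) ℝ) :
    (M * Mᵀ).trace = ∑ i, ∑ j, (M i j) ^ 2 := by
  simp [Matrix.trace, Matrix.diag, Matrix.mul_apply, sq]

lemma frob_sq (M : Matrix (Fin n) (Fin n) ℝ) :
    ‖M.map (Complex.ofReal : ℝ → ℂ)‖ ^ 2 = (M * Mᵀ).trace := by
  rw [Matrix.frobenius_norm_map_eq M Complex.ofReal (fun x => Complex.norm_real x),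
    trace_mul_transpose_eq, Matrix.frobenius_norm_def]
  have h2 : ∀ x : ℝ, ‖x‖ ^ (2 : ℝ) = x ^ 2 := fun x => by
    rw [show (2 : ℝ) = ((2 : ℕ) : ℝ) by norm_num, Real.rpow_natCast, Real.norm_eq_abs, sq_abs]
  simp_rw [h2]
  rw [← Real.rpow_natCast _ 2, ← Real.rpow_mul (by positivity)]
  norm_num

lemma frob_one_sq : ‖(1 : Matrix (Fin n) (Fin n) ℂ)‖ ^ 2 = (n : ℝ) := by
  have h : (1 : Matrix (Fin n) (Fin n) ℂ) = (1 : Matrix (Fin n) (Fin n) ℝ).map Complex.ofReal := by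
    ext i j
    by_cases hij : i = j <;> simp [Matrix.one_apply, hij]
  rw [h, frob_sq]
  simp [Matrix.trace_one]

lemma specRad_zero_of_n_eq_zero (A : Matrix (Fin 0) (Fin 0) ℝ) : specRad A = 0 := by
  have hσ : spectrum ℂ (A.map Complex.ofReal) = ∅ :=
    Set.eq_empty_of_forall_notMem fun k hk => hk (isUnit_of_subsingleton _)
  rw [specRad, spectralRadius, hσ]
  simp

lemma pow_specRad_sq_le (A : Matrix (Fin n) (Fin n) ℝ) (hρ : 0 < specRad A) (m : ℕ) :
    specRad A ^ (2 * m) ≤ (A ^ m * (A ^ m)ᵀ).trace * n := by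
  set B := A.map (Complex.ofReal : ℝ → ℂ) with hB
  have hne : (spectrum ℂ B).Nonempty := by
    by_contra h
    rw [Set.not_nonempty_iff_eq_empty] at h
    have h0 : specRad A = 0 := by
      rw [specRad, spectralRadius, ← hB, h]; simp
    rw [h0] at hρ; exact lt_irrefl _ hρ
  obtain ⟨μ, hμ, hμr⟩ := spectrum.exists_nnnorm_eq_spectralRadius_of_nonempty hne
  have hnorm : ‖μ‖ = specRad A := by
    rw [specRad, ← hB, ← hμr]; simp
  have hBm : B ^ m = (A ^ m).map (Complex.ofReal : ℝ → ℂ) := by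
    have : B = Complex.ofRealHom.mapMatrix A := rfl
    rw [this, ← map_pow]
    rfl
  have hpow : μ ^ m ∈ spectrum ℂ (B ^ m) := by
    have hmem : μ ^ m ∈ spectrum ℂ (Polynomial.aeval B (Polynomial.X ^ m : Polynomial ℂ)) :=
      spectrum.subset_polynomial_aeval B _ ⟨μ, hμ, by simp⟩
    simpa using hmem
  have hle : ‖μ ^ m‖ ≤ ‖B ^ m‖ * ‖(1 : Matrix (Fin n) (Fin n) ℂ)‖ :=
    spectrum.norm_le_norm_mul_of_mem hpow
  rw [norm_pow, hnorm, hBm] at hle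
  have hsq : (specRad A ^ m) ^ 2 ≤ (‖(A ^ m).map (Complex.ofReal : ℝ → ℂ)‖ *
      ‖(1 : Matrix (Fin n) (Fin n) ℂ)‖) ^ 2 := by
    apply pow_le_pow_left₀ (by positivity) hle
  rw [mul_pow, frob_sq, frob_one_sq, ← pow_mul, mul_comm m 2] at hsq
  exact hsq

lemma iter_posSemidef (A W P : Matrix (Fin n) (Fin n) ℝ)
    (hW : W.PosSemidef) (hP : P.PosSemidef) :
    ∀ i : ℕ, ((fun X => A * X * Aᵀ + W)^[i] P).PosSemidef := by
  intro i
  induction i with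
  | zero => exact hP
  | succ i ih =>
    rw [Function.iterate_succ_apply']
    have h := ih.mul_mul_conjTranspose_same A
    rw [conjTranspose_eq_transpose_of_trivial] at h
    exact h.add hW

lemma iter_sub_posSemidef (A W P : Matrix (Fin n) (Fin n) ℝ)
    (hW : W.PosSemidef) (hP : P.PosSemidef) :
    ∀ m : ℕ, (((fun X => A * X * Aᵀ + W)^[m + 1] P) - A ^ m * W * (A ^ m)ᵀ).PosSemidef := by
  intro m
  induction m with
  | zero =>
    have h := hP.mul_mul_conjTranspose_same A
    rw [conjTranspose_eq_transpose_of_trivial] at h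
    simpa [pow_zero, Function.iterate_one] using h
  | succ m ih =>
    have h1 := ih.mul_mul_conjTranspose_same A
    rw [conjTranspose_eq_transpose_of_trivial] at h1
    have h2 := h1.add hW
    have key : ((fun X => A * X * Aᵀ + W)^[m + 1 + 1] P) - A ^ (m + 1) * W * (A ^ (m + 1))ᵀ =
        A * (((fun X => A * X * Aᵀ + W)^[m + 1] P) - A ^ m * W * (A ^ m)ᵀ) * Aᵀ + W := by
      rw [Function.iterate_succ_apply']
      simp only [pow_succ', transpose_mul]
      noncomm_ring
    rw [key]
    exact h2

lemma sub_smul_one_posSemidef [NeZero n] {W : Matrix (Fin n) (Fin n) ℝ} (hW : W.PosDef) :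
    (W - (Finset.univ.inf' Finset.univ_nonempty hW.1.eigenvalues) •
      (1 : Matrix (Fin n) (Fin n) ℝ)).PosSemidef := by
  set ε := Finset.univ.inf' Finset.univ_nonempty hW.1.eigenvalues with hε
  set U : Matrix (Fin n) (Fin n) ℝ := (hW.1.eigenvectorUnitary : Matrix (Fin n) (Fin n) ℝ)
    with hU
  have hUU : U * star U = 1 := (Matrix.mem_unitaryGroup_iff).mp hW.1.eigenvectorUnitary.2
  have key : W - ε • (1 : Matrix (Fin n) (Fin n) ℝ) =
      U * diagonal (fun i => hW.1.eigenvalues i - ε) * star U := by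
    have h1 : ε • (1 : Matrix (Fin n) (Fin n) ℝ) = U * (diagonal fun _ => ε) * star U := by
      rw [← Matrix.smul_one_eq_diagonal, mul_smul_comm, smul_mul_assoc, mul_one, hUU]
    conv_lhs => rw [hW.1.spectral_theorem, Unitary.conjStarAlgAut_apply, h1]
    rw [← sub_mul, ← mul_sub, diagonal_sub]
    congr 2
  rw [key]
  have hd : (diagonal (fun i => hW.1.eigenvalues i - ε)).PosSemidef := by
    refine posSemidef_diagonal_iff.mpr fun i => sub_nonneg.mpr ?_
    exact Finset.inf'_le _ (Finset.mem_univ i)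
  have h := hd.mul_mul_conjTranspose_same U
  rwa [← Matrix.star_eq_conjTranspose] at h

end Aux

/-- (Lemma 1, lower bound): if W is symmetric positive definite and P̄ is symmetric
PSD, then there is η > 0 with c(i) = Tr(ζ^i(P̄)) ≥ η ρ(A)^(2i) for all i ≥ 1,
where ζ(X) = A X Aᵀ + W. -/
theorem stmt_1 {n : ℕ} (A W P : Matrix (Fin n) (Fin n) ℝ)
    (hW : W.PosDef) (hP : P.PosSemidef) :
    ∃ η : ℝ, 0 < η ∧ ∀ i : ℕ, 1 ≤ i →
      η * specRad A ^ (2 * i) ≤ ((fun X => A * X * Aᵀ + W)^[i] P).trace := by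
  have hρ0 : 0 ≤ specRad A := ENNReal.toReal_nonneg
  rcases eq_or_lt_of_le hρ0 with hρ | hρ
  · -- specRad A = 0
    refine ⟨1, one_pos, fun i hi => ?_⟩
    rw [← hρ, zero_pow (by omega : 2 * i ≠ 0), mul_zero]
    exact trace_nonneg_of_posSemidef (iter_posSemidef A W P hW.posSemidef hP i)
  · -- specRad A > 0; then n ≠ 0
    have hn : n ≠ 0 := by
      rintro rfl
      rw [specRad_zero_of_n_eq_zero A] at hρ
      exact lt_irrefl _ hρ
    haveI : NeZero n := ⟨hn⟩
    haveI : Nonempty (Fin n) := ⟨⟨0, Nat.pos_of_ne_zero hn⟩⟩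
    set ε := Finset.univ.inf' Finset.univ_nonempty hW.1.eigenvalues with hεdef
    have hε : 0 < ε := by
      rw [hεdef]
      exact (Finset.lt_inf'_iff _).mpr fun i _ => hW.eigenvalues_pos i
    refine ⟨ε / (n * specRad A ^ 2), by positivity, fun i hi => ?_⟩
    obtain ⟨m, rfl⟩ : ∃ m, i = m + 1 := ⟨i - 1, by omega⟩
    -- step 1: trace of iterate ≥ trace of A^m W (A^m)ᵀ
    have h1 : (A ^ m * W * (A ^ m)ᵀ).trace ≤ ((fun X => A * X * Aᵀ + W)^[m + 1] P).trace := by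
      have h := trace_nonneg_of_posSemidef (iter_sub_posSemidef A W P hW.posSemidef hP m)
      rw [Matrix.trace_sub] at h
      linarith
    -- step 2: ε * trace(A^m (A^m)ᵀ) ≤ trace(A^m W (A^m)ᵀ)
    have h2 : ε * (A ^ m * (A ^ m)ᵀ).trace ≤ (A ^ m * W * (A ^ m)ᵀ).trace := by
      have hps := (sub_smul_one_posSemidef hW).mul_mul_conjTranspose_same (A ^ m)
      rw [conjTranspose_eq_transpose_of_trivial] at hps
      have h := trace_nonneg_of_posSemidef hps
      have hexp : A ^ m * (W - ε • (1 : Matrix (Fin n) (Fin n) ℝ)) * (A ^ m)ᵀ =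
          A ^ m * W * (A ^ m)ᵀ - ε • (A ^ m * (A ^ m)ᵀ) := by
        rw [mul_sub, sub_mul, mul_smul_comm, smul_mul_assoc, mul_one]
      rw [hexp, Matrix.trace_sub, Matrix.trace_smul] at h
      simpa using h
    -- step 3: spectral radius bound
    have h3 : specRad A ^ (2 * m) ≤ (A ^ m * (A ^ m)ᵀ).trace * n := pow_specRad_sq_le A hρ m
    -- combine
    have hρne : specRad A ≠ 0 := ne_of_gt hρ
    have hnpos : (0 : ℝ) < n := by exact_mod_cast Nat.pos_of_ne_zero hn
    have heq : ε / (n * specRad A ^ 2) * specRad A ^ (2 * (m + 1)) =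
        (ε / n) * specRad A ^ (2 * m) := by
      rw [show 2 * (m + 1) = 2 * m + 2 by ring, pow_add]
      field_simp
    rw [heq]
    have h4 : (ε / n) * specRad A ^ (2 * m) ≤ ε * (A ^ m * (A ^ m)ᵀ).trace := by
      rw [div_mul_eq_mul_div, div_le_iff₀ hnpos]
      calc ε * specRad A ^ (2 * m) ≤ ε * ((A ^ m * (A ^ m)ᵀ).trace * n) := by
            exact mul_le_mul_of_nonneg_left h3 hε.le
        _ = ε * (A ^ m * (A ^ m)ᵀ).trace * n := by ring
    linarith
end

section
/- (Lemma 4 of the paper, abstract form) Let M be an n×n row-stochastic matrix and let L ≥ 1 be an integer such that every entry of M^{L-1} is strictly positive. Suppose that for each l ∈ {1,…,L}, E_l and Ẽ_l are nonnegative n×n matrices with E_l + Ẽ_l = M, and suppose Ẽ_L ≠ 0. Then for every m ∈ {1,…,n}, max_{l=1,…,L} ϑ(L_m · E_1 E_2 ⋯ E_{l-1} · Ẽ_l) > 0, where the empty product E_1 ⋯ E_0 is the identity matrix. -/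
open Matrix

private lemma mul_entry_nonneg {n : ℕ} {A B : Matrix (Fin n) (Fin n) ℝ}
    (hA : ∀ i j, 0 ≤ A i j) (hB : ∀ i j, 0 ≤ B i j) : ∀ i j, 0 ≤ (A * B) i j := by
  intro i j
  rw [Matrix.mul_apply]
  exact Finset.sum_nonneg fun k _ => mul_nonneg (hA i k) (hB k j)

private lemma entrySum_eq_zero {n : ℕ} {A : Matrix (Fin n) (Fin n) ℝ}
    (hA : ∀ i j, 0 ≤ A i j) (h : entrySum A ≤ 0) : A = 0 := by
  have h0 : entrySum A = 0 :=
    le_antisymm h (Finset.sum_nonneg fun i _ => Finset.sum_nonneg fun j _ => hA i j)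
  ext i j
  have h1 : ∀ i ∈ Finset.univ, ∑ j, A i j = 0 := by
    rw [← Finset.sum_eq_zero_iff_of_nonneg
      (fun i _ => Finset.sum_nonneg fun j _ => hA i j)]
    exact h0
  have h2 : ∀ j ∈ Finset.univ, A i j = 0 := by
    rw [← Finset.sum_eq_zero_iff_of_nonneg (fun j _ => hA i j)]
    exact h1 i (Finset.mem_univ i)
  simpa using h2 j (Finset.mem_univ j)

/-- (Lemma 4, abstract form). Here L_m is `stdBasisMatrix m m 1` and the ordered
product E_1 ⋯ E_{l-1} is `((List.range (l-1)).map (fun k => E (k+1))).prod`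
(the identity matrix when l = 1).  The conclusion "max_{l=1,…,L} ϑ(…) > 0"
is expressed as the existence of some l ∈ {1,…,L} with ϑ(…) > 0. -/
theorem stmt_3 {n : ℕ} (M : Matrix (Fin n) (Fin n) ℝ)
    (hMnonneg : ∀ i j, 0 ≤ M i j) (hMrow : ∀ i, ∑ j, M i j = 1)
    (L : ℕ) (hL : 1 ≤ L) (hpos : ∀ i j, 0 < (M ^ (L - 1)) i j)
    (E Etil : ℕ → Matrix (Fin n) (Fin n) ℝ)
    (hE : ∀ l, 1 ≤ l → l ≤ L → ∀ i j, 0 ≤ E l i j)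
    (hEtil : ∀ l, 1 ≤ l → l ≤ L → ∀ i j, 0 ≤ Etil l i j)
    (hsum : ∀ l, 1 ≤ l → l ≤ L → E l + Etil l = M)
    (hlast : Etil L ≠ 0) :
    ∀ m : Fin n, ∃ l : ℕ, 1 ≤ l ∧ l ≤ L ∧
      0 < entrySum (Matrix.single m m (1 : ℝ) *
        ((List.range (l - 1)).map (fun k => E (k + 1))).prod * Etil l) := by
  intro m
  by_contra hcon
  push_neg at hcon
  set Q : ℕ → Matrix (Fin n) (Fin n) ℝ :=
    fun k => ((List.range k).map (fun j => E (j + 1))).prod with hQ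
  set S : Matrix (Fin n) (Fin n) ℝ := Matrix.single m m (1 : ℝ) with hS
  -- nonnegativity of S * Q k
  have hSnn : ∀ i j, 0 ≤ S i j := by
    intro i j
    simp only [hS, Matrix.single]
    dsimp [Matrix.of_apply]
    positivity
  have hQnn : ∀ k, k + 1 ≤ L → ∀ i j, 0 ≤ (S * Q k) i j := by
    intro k
    induction k with
    | zero => intro _ i j; simpa [hQ] using hSnn i j
    | succ k ih =>
      intro hk i j
      have hQsucc : Q (k + 1) = Q k * E (k + 1) := by
        simp [hQ, List.range_succ]
      rw [hQsucc, ← mul_assoc]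
      exact mul_entry_nonneg (ih (by omega)) (hE (k + 1) (by omega) (by omega)) i j
  -- the zero-ness of each S * Q (l-1) * Etil l
  have hzero : ∀ l, 1 ≤ l → l ≤ L → S * Q (l - 1) * Etil l = 0 := by
    intro l h1 h2
    apply entrySum_eq_zero _ (hcon l h1 h2)
    exact mul_entry_nonneg (hQnn (l - 1) (by omega)) (hEtil l h1 h2)
  -- induction: S * M^k = S * Q k for k ≤ L - 1
  have hkey : ∀ k, k ≤ L - 1 → S * M ^ k = S * Q k := by
    intro k
    induction k with
    | zero => simp [hQ]
    | succ k ih =>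
      intro hk
      have hMeq : M = E (k + 1) + Etil (k + 1) := (hsum (k + 1) (by omega) (by omega)).symm
      have hQsucc : Q (k + 1) = Q k * E (k + 1) := by
        simp [hQ, List.range_succ]
      calc S * M ^ (k + 1) = S * M ^ k * M := by rw [pow_succ, mul_assoc]
        _ = S * Q k * (E (k + 1) + Etil (k + 1)) := by rw [ih (by omega), ← hMeq]
        _ = S * Q k * E (k + 1) + S * Q (k + 1 - 1) * Etil (k + 1) := by
            rw [mul_add]; rfl
        _ = S * Q (k + 1) := by
            rw [hzero (k + 1) (by omega) (by omega), add_zero, hQsucc, mul_assoc]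
  -- final contradiction
  have hfinal : S * M ^ (L - 1) * Etil L = 0 := by
    rw [hkey (L - 1) le_rfl]
    exact hzero L hL le_rfl
  -- but entrySum (S * M^(L-1) * Etil L) > 0
  obtain ⟨i, j, hij⟩ : ∃ i j, Etil L i j ≠ 0 := by
    by_contra hc
    push_neg at hc
    exact hlast (by ext i j; simpa using hc i j)
  have hij' : 0 < Etil L i j := lt_of_le_of_ne (hEtil L hL le_rfl i j) (Ne.symm hij)
  have hprodnn : ∀ a b, 0 ≤ (S * M ^ (L - 1) * Etil L) a b := by
    refine mul_entry_nonneg (mul_entry_nonneg hSnn ?_) (hEtil L hL le_rfl)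
    intro a b; exact (hpos a b).le
  have hentry : 0 < (S * M ^ (L - 1) * Etil L) m j := by
    rw [mul_assoc, Matrix.mul_apply]
    have hterm : 0 < S m m * (M ^ (L - 1) * Etil L) m j := by
      have : 0 < (M ^ (L - 1) * Etil L) m j := by
        rw [Matrix.mul_apply]
        refine Finset.sum_pos' (fun k _ => mul_nonneg (hpos m k).le (hEtil L hL le_rfl k j))
          ⟨i, Finset.mem_univ i, mul_pos (hpos m i) hij'⟩
      simpa [hS] using this
    refine Finset.sum_pos' (fun k _ => mul_nonneg (hSnn m k) ?_) ⟨m, Finset.mem_univ m, hterm⟩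
    rw [Matrix.mul_apply]
    exact Finset.sum_nonneg fun a _ => mul_nonneg (hpos k a).le (hEtil L hL le_rfl a j)
  rw [hfinal] at hentry
  simp at hentry
end
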